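/- For all real x, γ and positive reals ν, α, β, the marginal likelihood of x obtained by integrating the Gaussian likelihood against the NIG prior has the closed form: ∫_{σ²=0}^{∞} ∫_{μ=-∞}^{∞} [√(1/(2πσ²)) exp(−(x−μ)²/(2σ²))] · p(μ, σ² | γ, ν, α, β) dμ dσ² = (Γ(α + 1/2)/Γ(α)) · √(ν/π) · (2β(1+ν))^α · (ν(x−γ)² + 2β(1+ν))^{−(α + 1/2)}. -/

import Mathlib

open MeasureTheory

/-- The joint density of the Normal-Inverse-Gamma (NIG) distribution with
parameters `γ ν α β`, evaluated at mean `μ` and variance `s = σ²`. -/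
noncomputable def nigPdf (γ ν α β μ s : ℝ) : ℝ :=
  (β ^ α * Real.sqrt ν) / (Real.Gamma α * Real.sqrt (2 * Real.pi * s)) *
    (1 / s) ^ (α + 1) * Real.exp (-(2 * β + ν * (γ - μ) ^ 2) / (2 * s))

/-!
For fixed `s = σ²`, completing the square in `μ` turns the Gaussian likelihood times the normal
factor of the prior into a Gaussian in `μ` of precision `(1 + ν) / s`, whose integral contributes
`√(2π s / (1 + ν))`. What remains is an unnormalised inverse-gamma density in `s` of shape
`α + 1/2` and scale `K = (ν (x - γ)² + 2β(1 + ν)) / (2(1 + ν))`, and the substitution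
`s = 1/y` reduces its integral to Euler's integral: `Γ(α + 1/2) K^{-(α + 1/2)}`.
-/

open Real Set

lemma integral_exp_neg_mul_sub_sq (b m : ℝ) :
    ∫ μ : ℝ, exp (-b * (μ - m) ^ 2) = √(π / b) := by
  rw [← integral_gaussian b]
  exact integral_sub_right_eq_self (fun μ ↦ exp (-b * μ ^ 2)) m

lemma integral_rpow_mul_exp_neg_div_Ioi {a K : ℝ} (ha : 0 < a) (hK : 0 < K) :
    ∫ s in Ioi (0 : ℝ), s ^ (-a - 1) * exp (-K / s) = Gamma a * K ^ (-a) := by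
  have hsubst := integral_comp_rpow_Ioi (fun y ↦ y ^ (a - 1) * exp (-(K * y)))
    (p := -1) (by norm_num)
  rw [integral_rpow_mul_exp_neg_mul_Ioi ha hK, one_div, inv_rpow hK.le, ← rpow_neg hK.le,
    mul_comm] at hsubst
  rw [← hsubst]
  refine setIntegral_congr_fun measurableSet_Ioi fun s (hs : 0 < s) ↦ ?_
  rw [smul_eq_mul, rpow_neg_one, inv_rpow hs.le, ← rpow_neg hs.le, abs_neg, abs_one, one_mul,
    ← mul_assoc, ← rpow_add hs, div_eq_mul_inv]
  ring_nf

lemma gaussian_mul_nigPdf {ν s : ℝ} (hν : 0 < ν) (hs : 0 < s) (x γ α β μ : ℝ) :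
    √(1 / (2 * π * s)) * exp (-(x - μ) ^ 2 / (2 * s)) * nigPdf γ ν α β μ s
      = β ^ α * √ν / (2 * π * Gamma α) * s ^ (-(α + 2)) *
          exp (-((ν * (x - γ) ^ 2 + 2 * β * (1 + ν)) / (2 * (1 + ν))) / s) *
          exp (-((1 + ν) / (2 * s)) * (μ - (x + ν * γ) / (1 + ν)) ^ 2) := by
  have hcomplete : -(x - μ) ^ 2 / (2 * s) + -(2 * β + ν * (γ - μ) ^ 2) / (2 * s)
      = -((ν * (x - γ) ^ 2 + 2 * β * (1 + ν)) / (2 * (1 + ν))) / s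
        + -((1 + ν) / (2 * s)) * (μ - (x + ν * γ) / (1 + ν)) ^ 2 := by
    field_simp
    ring
  have hsqrt : √(1 / (2 * π * s)) / √(2 * π * s) = (2 * π)⁻¹ * s⁻¹ := by
    rw [sqrt_div' _ (by positivity), sqrt_one, div_div, mul_self_sqrt (by positivity)]
    ring
  have hpow : (1 / s) ^ (α + 1) * s⁻¹ = s ^ (-(α + 2)) := by
    rw [one_div, inv_rpow hs.le, ← rpow_neg hs.le, ← rpow_neg_one, ← rpow_add hs]
    ring_nf
  calc _ = β ^ α * √ν / Gamma α * (√(1 / (2 * π * s)) / √(2 * π * s)) *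
          (1 / s) ^ (α + 1) *
          exp (-(x - μ) ^ 2 / (2 * s) + -(2 * β + ν * (γ - μ) ^ 2) / (2 * s)) := by
        rw [nigPdf, exp_add]
        ring
    _ = _ := by
        rw [hsqrt, hcomplete, exp_add, ← hpow]
        ring

lemma integral_gaussian_mul_nigPdf {ν s : ℝ} (hν : 0 < ν) (hs : 0 < s) (x γ α β : ℝ) :
    ∫ μ : ℝ, √(1 / (2 * π * s)) * exp (-(x - μ) ^ 2 / (2 * s)) * nigPdf γ ν α β μ s
      = β ^ α * √ν / (Gamma α * √(2 * π * (1 + ν))) * (s ^ (-(α + 1 / 2) - 1) *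
          exp (-((ν * (x - γ) ^ 2 + 2 * β * (1 + ν)) / (2 * (1 + ν))) / s)) := by
  simp_rw [gaussian_mul_nigPdf hν hs, integral_const_mul, integral_exp_neg_mul_sub_sq]
  have hsqrt : √(π / ((1 + ν) / (2 * s))) = 2 * π / √(2 * π * (1 + ν)) * √s := by
    rw [sqrt_eq_iff_mul_self_eq (by positivity) (by positivity)]
    field_simp
    rw [sq_sqrt (by positivity), sq_sqrt hs.le]
    ring
  have hpow : s ^ (-(α + 2)) * √s = s ^ (-(α + 1 / 2) - 1) := by
    rw [sqrt_eq_rpow, ← rpow_add hs]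
    ring_nf
  rw [hsqrt, ← hpow]
  field_simp

/-- The marginal likelihood of a Gaussian observation `x` under a
Normal-Inverse-Gamma prior has the stated closed form. -/
theorem nig_marginal_likelihood
    (x γ ν α β : ℝ) (hν : 0 < ν) (hα : 0 < α) (hβ : 0 < β) :
    ∫ s in Set.Ioi (0 : ℝ), ∫ μ : ℝ,
        (Real.sqrt (1 / (2 * Real.pi * s)) * Real.exp (-(x - μ) ^ 2 / (2 * s))) *
          nigPdf γ ν α β μ s
      = (Real.Gamma (α + 1 / 2) / Real.Gamma α) * Real.sqrt (ν / Real.pi) *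
          (2 * β * (1 + ν)) ^ α *
          (ν * (x - γ) ^ 2 + 2 * β * (1 + ν)) ^ (-(α + 1 / 2)) := by
  set T := ν * (x - γ) ^ 2 + 2 * β * (1 + ν)
  have hT : 0 < T := by positivity
  rw [setIntegral_congr_fun measurableSet_Ioi
      fun s hs ↦ integral_gaussian_mul_nigPdf hν hs x γ α β,
    integral_const_mul, integral_rpow_mul_exp_neg_div_Ioi (by positivity) (by positivity)]
  have hscale : (T / (2 * (1 + ν))) ^ (-(α + 1 / 2))
      = (2 * (1 + ν)) ^ α * √(2 * (1 + ν)) * T ^ (-(α + 1 / 2)) := by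
    have h2ν : (0 : ℝ) ≤ 2 * (1 + ν) := by positivity
    rw [div_rpow hT.le h2ν, rpow_neg h2ν, div_inv_eq_mul, rpow_add (by positivity),
      ← sqrt_eq_rpow]
    ring
  rw [hscale, show 2 * β * (1 + ν) = β * (2 * (1 + ν)) by ring,
    mul_rpow hβ.le (by positivity), sqrt_div' _ pi_pos.le,
    show 2 * π * (1 + ν) = 2 * (1 + ν) * π by ring, sqrt_mul (by positivity)]
  field_simp
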